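/- arXiv:2012.11162 — 2 statements merged into one kernel-verified Lean document; each statement's English description precedes it below -/
import Mathlib

section
/- Let G be a bipartite simple graph with n vertices and m ≥ 1 edges. Then the largest singular value of the LI-matrix of G equals μ₁(G) − 2m/n, i.e. σ₁(LI(G)) = μ₁(G) − 2m/n; equivalently, μ₁(G) ≥ 4m/n for every bipartite graph with at least one edge. -/
/-!
The top Laplacian eigenvalue `μ₁` bounds the Rayleigh quotient `xᵀL(G)x / xᵀx`. For a bipartite
graph, the `±1` vector of a proper 2-colouring has `(xᵤ - xᵥ)² = 4` on every edge, hence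
Rayleigh quotient `4m/n`, so `μ₁ ≥ 4m/n`. Consequently `μ₁ - 2m/n ≥ 2m/n`, and since every
`μᵢ` lies in `[0, μ₁]`, each `|μᵢ - 2m/n|` is at most `μ₁ - 2m/n`.
-/
open Finset SimpleGraph

attribute [local instance] Classical.propDecidable

/-- The `i`-th largest value of the tuple `f` (values sorted in non-increasing order). -/
noncomputable def sortDesc {n : ℕ} (f : Fin n → ℝ) : Fin n → ℝ :=
  fun i => f (Tuple.sort f i.rev)

/-- The Laplacian eigenvalues of `G`, in non-increasing order:
`lapEig G 0 = μ₁ ≥ lapEig G 1 = μ₂ ≥ ⋯`. -/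
noncomputable def lapEig {n : ℕ} (G : SimpleGraph (Fin n)) : Fin n → ℝ :=
  sortDesc (SimpleGraph.posSemidef_lapMatrix ℝ G).isHermitian.eigenvalues

/-- The number of edges of `G`. -/
noncomputable def numEdges {n : ℕ} (G : SimpleGraph (Fin n)) : ℕ :=
  G.edgeFinset.card

/-- The singular values of the LI-matrix `LI(G) = L(G) - (2m/n)·Iₙ`, in non-increasing
order; they are the values `|μᵢ - 2m/n|` sorted non-increasingly. -/
noncomputable def LIsv {n : ℕ} (G : SimpleGraph (Fin n)) : Fin n → ℝ :=
  sortDesc (fun i => |lapEig G i - 2 * numEdges G / n|)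

/-- The Ky Fan `k`-norm of the LI-matrix of `G`: the sum of the `k` largest singular
values of `LI(G)`. -/
noncomputable def kyFanLI {n : ℕ} (G : SimpleGraph (Fin n)) (k : ℕ) : ℝ :=
  ∑ i ∈ Finset.univ.filter (fun i : Fin n => (i : ℕ) < k), LIsv G i

/-- `S_k(L(G))`, the sum of the `k` largest Laplacian eigenvalues of `G`. -/
noncomputable def lapSum {n : ℕ} (G : SimpleGraph (Fin n)) (k : ℕ) : ℝ :=
  ∑ i ∈ Finset.univ.filter (fun i : Fin n => (i : ℕ) < k), lapEig G i

open Matrix Unitary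

lemma sortDesc_antitone {n : ℕ} (f : Fin n → ℝ) : Antitone (sortDesc f) :=
  fun _ _ hij ↦ Tuple.monotone_sort f (Fin.rev_le_rev.mpr hij)

lemma le_sortDesc_zero {n : ℕ} (hn : 0 < n) (f : Fin n → ℝ) (i : Fin n) :
    f i ≤ sortDesc f ⟨0, hn⟩ := by
  have h0 : (⟨0, hn⟩ : Fin n) ≤ ((Tuple.sort f).symm i).rev := Nat.zero_le _
  simpa [sortDesc] using sortDesc_antitone f h0

lemma sortDesc_zero_eq {n : ℕ} (hn : 0 < n) {f : Fin n → ℝ} {i₀ : Fin n}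
    (hmax : ∀ i, f i ≤ f i₀) : sortDesc f ⟨0, hn⟩ = f i₀ :=
  le_antisymm (hmax _) (le_sortDesc_zero hn f i₀)

lemma Matrix.IsHermitian.posSemidef_smul_one_sub {ι : Type*} [Fintype ι] [DecidableEq ι]
    {A : Matrix ι ι ℝ} (hA : A.IsHermitian) {t : ℝ} (ht : ∀ i, hA.eigenvalues i ≤ t) :
    (t • 1 - A).PosSemidef := by
  have hconj : t • 1 - A =
      conjStarAlgAut ℝ _ hA.eigenvectorUnitary (diagonal fun i ↦ t - hA.eigenvalues i) := by
    conv_lhs => rw [hA.spectral_theorem]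
    rw [← map_one (conjStarAlgAut ℝ _ hA.eigenvectorUnitary), ← map_smul, ← map_sub]
    congr 1
    ext i j
    by_cases h : i = j <;> simp [h, diagonal]
  rw [hconj, conjStarAlgAut_apply, isUnit_coe.posSemidef_star_right_conjugate_iff,
    posSemidef_diagonal_iff]
  exact fun i ↦ sub_nonneg.mpr (ht i)

lemma Matrix.IsHermitian.dotProduct_mulVec_le {ι : Type*} [Fintype ι] [DecidableEq ι]
    {A : Matrix ι ι ℝ} (hA : A.IsHermitian) {t : ℝ} (ht : ∀ i, hA.eigenvalues i ≤ t)
    (x : ι → ℝ) : x ⬝ᵥ A *ᵥ x ≤ t * (x ⬝ᵥ x) := by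
  have := (hA.posSemidef_smul_one_sub ht).dotProduct_mulVec_nonneg x
  simp only [star_trivial, sub_mulVec, smul_mulVec, one_mulVec, dotProduct_sub,
    dotProduct_smul, smul_eq_mul] at this
  linarith

namespace SimpleGraph

theorem dotProduct_lapMatrix_mulVec_of_forall_adj {V : Type*} [Fintype V] [DecidableEq V]
    (G : SimpleGraph V) [DecidableRel G.Adj] {x : V → ℝ} {c : ℝ}
    (hx : ∀ i j, G.Adj i j → (x i - x j) ^ 2 = c) :
    x ⬝ᵥ G.lapMatrix ℝ *ᵥ x = c * #G.edgeFinset := by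
  have hrow : ∀ i, (∑ j, if G.Adj i j then (x i - x j) ^ 2 else 0) = c * G.degree i := by
    intro i
    rw [G.degree_eq_sum_if_adj (R := ℝ), mul_sum]
    exact sum_congr rfl fun j _ ↦ by split_ifs with h <;> simp [h, hx i j]
  rw [← toLinearMap₂'_apply', lapMatrix_toLinearMap₂']
  simp_rw [hrow, ← mul_sum]
  rw [← Nat.cast_sum, sum_degrees_eq_twice_card_edges]
  push_cast
  ring

namespace Coloring

variable {V : Type*} {G : SimpleGraph V}

noncomputable def sign (C : G.Coloring (Fin 2)) (v : V) : ℝ :=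
  if C v = 0 then 1 else -1

lemma sign_mul_self (C : G.Coloring (Fin 2)) (v : V) : C.sign v * C.sign v = 1 := by
  unfold sign
  split_ifs <;> norm_num

lemma sign_sub_sign_sq (C : G.Coloring (Fin 2)) {i j : V} (h : G.Adj i j) :
    (C.sign i - C.sign j) ^ 2 = 4 := by
  have hne := C.valid h
  unfold sign
  revert hne
  generalize C i = a
  generalize C j = b
  fin_cases a <;> fin_cases b <;> norm_num

lemma dotProduct_sign_self [Fintype V] (C : G.Coloring (Fin 2)) :
    C.sign ⬝ᵥ C.sign = Fintype.card V := by
  simp [dotProduct, C.sign_mul_self]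

lemma dotProduct_lapMatrix_mulVec_sign [Fintype V] [DecidableEq V] [DecidableRel G.Adj]
    (C : G.Coloring (Fin 2)) : C.sign ⬝ᵥ G.lapMatrix ℝ *ᵥ C.sign = 4 * #G.edgeFinset :=
  G.dotProduct_lapMatrix_mulVec_of_forall_adj fun _ _ ↦ C.sign_sub_sign_sq

end Coloring

end SimpleGraph

lemma lapEig_nonneg {n : ℕ} (G : SimpleGraph (Fin n)) (i : Fin n) : 0 ≤ lapEig G i :=
  (posSemidef_lapMatrix ℝ G).eigenvalues_nonneg _

lemma lapEig_le_lapEig_zero {n : ℕ} (hn : 0 < n) (G : SimpleGraph (Fin n)) (i : Fin n) :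
    lapEig G i ≤ lapEig G ⟨0, hn⟩ :=
  sortDesc_antitone _ (Nat.zero_le _)

lemma four_mul_numEdges_div_le_lapEig_zero {n : ℕ} (hn : 0 < n) (G : SimpleGraph (Fin n))
    (hbip : G.Colorable 2) : 4 * (numEdges G : ℝ) / n ≤ lapEig G ⟨0, hn⟩ := by
  obtain ⟨C⟩ := hbip
  have := (posSemidef_lapMatrix ℝ G).isHermitian.dotProduct_mulVec_le
    (le_sortDesc_zero hn _) C.sign
  rw [C.dotProduct_lapMatrix_mulVec_sign, C.dotProduct_sign_self, Fintype.card_fin] at this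
  rwa [div_le_iff₀ (by exact_mod_cast hn)]

theorem stmt_3_general {n : ℕ} (hn : 0 < n) (G : SimpleGraph (Fin n))
    (hbip : G.Colorable 2) :
    LIsv G ⟨0, hn⟩ = lapEig G ⟨0, hn⟩ - 2 * (numEdges G : ℝ) / n ∧
      4 * (numEdges G : ℝ) / n ≤ lapEig G ⟨0, hn⟩ := by
  have hμ := four_mul_numEdges_div_le_lapEig_zero hn G hbip
  set c : ℝ := 2 * (numEdges G : ℝ) / n
  have hc : 0 ≤ c := by positivity
  have h2c : 2 * c ≤ lapEig G ⟨0, hn⟩ := by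
    calc 2 * c = 4 * (numEdges G : ℝ) / n := by ring
      _ ≤ _ := hμ
  have hc_le : c ≤ lapEig G ⟨0, hn⟩ := by linarith
  have hmax : ∀ i, |lapEig G i - c| ≤ |lapEig G ⟨0, hn⟩ - c| := fun i ↦ by
    rw [abs_of_nonneg (sub_nonneg.mpr hc_le), abs_le]
    constructor <;> linarith [lapEig_nonneg G i, lapEig_le_lapEig_zero hn G i]
  refine ⟨?_, hμ⟩
  rw [LIsv, sortDesc_zero_eq hn hmax, abs_of_nonneg (sub_nonneg.mpr hc_le)]

/-- If `G` is a bipartite simple graph with `n` vertices and `m ≥ 1` edges,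
then `σ₁(LI(G)) = μ₁(G) - 2m/n`; equivalently, `μ₁(G) ≥ 4m/n`. -/
theorem stmt_3 {n : ℕ} (hn : 0 < n) (G : SimpleGraph (Fin n))
    (hbip : G.Colorable 2) (hm : 1 ≤ numEdges G) :
    LIsv G ⟨0, hn⟩ = lapEig G ⟨0, hn⟩ - 2 * (numEdges G : ℝ) / n ∧
      4 * (numEdges G : ℝ) / n ≤ lapEig G ⟨0, hn⟩ :=
  stmt_3_general hn G hbip
end

section
/- Let G be a simple graph with n vertices and m > 1 edges, and let d₂ be the second largest vertex degree of G. If d₂ ≥ 4m/n, then for every 1 ≤ k ≤ n, ||LI(G)||_{F_k} ≤ kn − 2km/n. -/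
open Finset SimpleGraph

attribute [local instance] Classical.propDecidable

open Matrix in
private lemma quad_bound {n : ℕ} (G : SimpleGraph (Fin n)) (x : Fin n → ℝ) :
    x ⬝ᵥ ((G.lapMatrix ℝ) *ᵥ x) ≤ n * (∑ i, x i ^ 2) := by
  have h1 : x ⬝ᵥ ((G.lapMatrix ℝ) *ᵥ x) =
      (∑ i : Fin n, ∑ j : Fin n, if G.Adj i j then (x i - x j)^2 else 0) / 2 := by
    have := G.lapMatrix_toLinearMap₂' (R := ℝ) x
    rwa [Matrix.toLinearMap₂'_apply'] at this
  have h2 : ∑ i : Fin n, ∑ j : Fin n, (x i - x j)^2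
      = 2 * n * (∑ i, x i ^ 2) - 2 * (∑ i, x i)^2 := by
    have : ∀ i j : Fin n, (x i - x j)^2 = x i ^2 + x j ^2 - 2*(x i * x j) := by
      intros; ring
    simp_rw [this, Finset.sum_sub_distrib, Finset.sum_add_distrib, Finset.sum_const,
      Finset.card_univ, Fintype.card_fin, ← Finset.mul_sum, ← Finset.sum_mul, sq (∑ i, x i),
      nsmul_eq_mul]
    rw [← Finset.mul_sum]
    ring
  have h3 : (∑ i : Fin n, ∑ j : Fin n, if G.Adj i j then (x i - x j)^2 else 0)
      ≤ ∑ i : Fin n, ∑ j : Fin n, (x i - x j)^2 := by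
    apply Finset.sum_le_sum; intro i _; apply Finset.sum_le_sum; intro j _
    split
    · exact le_refl _
    · positivity
  nlinarith [sq_nonneg (∑ i, x i)]

open Matrix in
private lemma eig_le {n : ℕ} (G : SimpleGraph (Fin n)) (i : Fin n) :
    (SimpleGraph.posSemidef_lapMatrix ℝ G).isHermitian.eigenvalues i ≤ n := by
  set hL := (SimpleGraph.posSemidef_lapMatrix ℝ G).isHermitian
  set v : EuclideanSpace ℝ (Fin n) := hL.eigenvectorBasis i with hv
  set w : Fin n → ℝ := ⇑v with hw
  have hmv : (G.lapMatrix ℝ) *ᵥ w = hL.eigenvalues i • w := hL.mulVec_eigenvectorBasis i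
  have hnorm : ‖v‖ = 1 := hL.eigenvectorBasis.orthonormal.1 i
  have hsum : ∑ j, w j ^ 2 = 1 := by
    have h2 : Real.sqrt (∑ j, ‖w j‖ ^ 2) = 1 := by
      have h := EuclideanSpace.norm_eq v
      rw [hnorm] at h
      exact h.symm
    have hnn : (0:ℝ) ≤ ∑ j, ‖w j‖ ^ 2 := Finset.sum_nonneg fun j _ => sq_nonneg _
    have h3 : (∑ j, ‖w j‖ ^ 2) = 1 := by
      nlinarith [Real.sq_sqrt hnn]
    simpa [Real.norm_eq_abs, sq_abs] using h3
  have hq := quad_bound G w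
  rw [hmv] at hq
  have hdp : w ⬝ᵥ (hL.eigenvalues i • w) = hL.eigenvalues i * ∑ j, w j ^ 2 := by
    simp only [dotProduct, Pi.smul_apply, smul_eq_mul, Finset.mul_sum]
    congr 1; funext j; ring
  rw [hdp, hsum] at hq
  simpa [hsum] using hq

private lemma eig_mem {n : ℕ} (G : SimpleGraph (Fin n)) (i : Fin n) :
    0 ≤ lapEig G i ∧ lapEig G i ≤ n := by
  unfold lapEig sortDesc
  exact ⟨(SimpleGraph.posSemidef_lapMatrix ℝ G).eigenvalues_nonneg _, eig_le G _⟩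

/-- Let `G` be a simple graph with `n` vertices, `m > 1` edges, whose
second largest vertex degree `d₂` satisfies `d₂ ≥ 4m/n`. Then for every `1 ≤ k ≤ n`,
`‖LI(G)‖_{F_k} ≤ kn - 2km/n`. -/
theorem stmt_13 {n : ℕ} (hn : 1 < n) (G : SimpleGraph (Fin n))
    (hm : 1 < numEdges G)
    (hd2 : 4 * (numEdges G : ℝ) / n ≤ sortDesc (fun w : Fin n => (G.degree w : ℝ)) ⟨1, hn⟩) :
    ∀ k : ℕ, 1 ≤ k → k ≤ n →
      kyFanLI G k ≤ (k : ℝ) * n - 2 * (k : ℝ) * (numEdges G : ℝ) / n := by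
  intro k hk1 hkn
  have hn0 : (0:ℝ) < n := by positivity
  set m : ℝ := (numEdges G : ℝ) with hmdef
  have hm0 : (0:ℝ) ≤ m := Nat.cast_nonneg _
  -- 4m/n ≤ n since d₂ < n
  have hdlt : sortDesc (fun w : Fin n => (G.degree w : ℝ)) ⟨1, hn⟩ ≤ (n:ℝ) := by
    unfold sortDesc
    have := G.degree_lt_card_verts (Tuple.sort (fun w : Fin n => (G.degree w : ℝ))
      ((⟨1, hn⟩ : Fin n).rev))
    simp only [Fintype.card_fin] at this
    beta_reduce
    exact_mod_cast this.le
  have h4m : 4 * m / n ≤ n := le_trans hd2 hdlt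
  -- each singular value is at most n - 2m/n
  have hsv : ∀ i : Fin n, LIsv G i ≤ (n:ℝ) - 2 * m / n := by
    intro i
    unfold LIsv sortDesc
    rw [← hmdef]
    obtain ⟨h0, hle⟩ := eig_mem G
      (Tuple.sort (fun i => |lapEig G i - 2 * m / n|) i.rev)
    have h44 : 4 * m / n = 2 * m / n + 2 * m / n := by ring
    rw [abs_le]
    constructor <;> linarith
  -- cardinality of the index set
  have hcard : (Finset.univ.filter (fun i : Fin n => (i : ℕ) < k)).card = k := by
    rw [Finset.card_filter]
    rw [Fin.sum_univ_eq_sum_range (fun i => if i < k then 1 else 0) n]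
    rw [← Finset.card_filter]
    have : (Finset.range n).filter (· < k) = Finset.range k := by
      ext a; simp; omega
    rw [this, Finset.card_range]
  calc kyFanLI G k ≤ ∑ _i ∈ Finset.univ.filter (fun i : Fin n => (i : ℕ) < k),
        ((n:ℝ) - 2 * m / n) := Finset.sum_le_sum (fun i _ => hsv i)
    _ = (k:ℝ) * ((n:ℝ) - 2 * m / n) := by rw [Finset.sum_const, hcard, nsmul_eq_mul]
    _ = (k : ℝ) * n - 2 * (k : ℝ) * m / n := by ring
end
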